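/- arXiv:2412.06701 — 5 statements merged into one kernel-verified Lean document; each statement's English description precedes it below -/
import Mathlib

section
/- Let r ≥ 1 and let a, b be positive definite real symmetric r×r matrices (Matrix.PosDef). Then the matrices a + a·b⁻¹·a and a + b are positive definite (hence invertible), and (a + a·b⁻¹·a)⁻¹ + (a + b)⁻¹ = a⁻¹, where the products are ordinary matrix products and inverses are matrix inverses. -/
open Matrix

/-- For positive definite real symmetric matrices `a` and `b`, the matrices
`a + a * b⁻¹ * a` and `a + b` are positive definite, and
`(a + a * b⁻¹ * a)⁻¹ + (a + b)⁻¹ = a⁻¹`. -/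
theorem stmt_0 (r : ℕ) (hr : 1 ≤ r) (a b : Matrix (Fin r) (Fin r) ℝ)
    (ha : a.PosDef) (hb : b.PosDef) :
    (a + a * b⁻¹ * a).PosDef ∧ (a + b).PosDef ∧
      (a + a * b⁻¹ * a)⁻¹ + (a + b)⁻¹ = a⁻¹ := by
  have hua : IsUnit a.det := ha.det_pos.ne'.isUnit
  have hub : IsUnit b.det := hb.det_pos.ne'.isUnit
  have hPsd : (a * b⁻¹ * a).PosSemidef := by
    have := hb.inv.posSemidef.conjTranspose_mul_mul_same a
    rwa [ha.isHermitian.eq] at this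
  have h1 : (a + a * b⁻¹ * a).PosDef := ha.add_posSemidef hPsd
  have h2 : (a + b).PosDef := ha.add hb
  refine ⟨h1, h2, ?_⟩
  have huab : IsUnit (a + b).det := h2.det_pos.ne'.isUnit
  have key : a + a * b⁻¹ * a = a * b⁻¹ * (b + a) := by
    rw [mul_add, Matrix.mul_assoc a b⁻¹ b, Matrix.nonsing_inv_mul b hub, Matrix.mul_one]
  rw [key, Matrix.mul_inv_rev, Matrix.mul_inv_rev, Matrix.nonsing_inv_nonsing_inv b hub]
  have hba : b + a = a + b := add_comm b a
  rw [hba]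
  calc (a + b)⁻¹ * (b * a⁻¹) + (a + b)⁻¹
      = (a + b)⁻¹ * ((b + a) * a⁻¹) := by
        rw [Matrix.add_mul, Matrix.mul_add, Matrix.mul_nonsing_inv a hua, Matrix.mul_one]
    _ = a⁻¹ := by
        rw [hba, ← Matrix.mul_assoc, Matrix.nonsing_inv_mul _ huab, Matrix.one_mul]
end

section
/- Fix p > 0. Let X and w be independent random variables such that X⁻¹ has law Gamma(p, 1/2) (so X is inverse-Gamma distributed) and w has law GIG(p; 1, 1). Then the random variable X/w² + 1/w has the same law as X. Equivalently, writing ν for the pushforward of Gamma(p, 1/2) under x ↦ x⁻¹: Measure.map (fun (x, w) => x/w² + 1/w) (ν ⊗ GIG(p; 1, 1)) = ν. -/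
open MeasureTheory ProbabilityTheory

/-- Unnormalized density of the generalized inverse Gaussian distribution `GIG(p; a, b)`. -/
noncomputable def gigDensity (p a b : ℝ) (x : ℝ) : ENNReal :=
  if 0 < x then ENNReal.ofReal (x ^ (p - 1) * Real.exp (-(a * x + b / x) / 2)) else 0

/-- The (scalar) generalized inverse Gaussian distribution `GIG(p; a, b)`. -/
noncomputable def GIG (p a b : ℝ) : Measure ℝ :=
  ((volume.withDensity (gigDensity p a b)) Set.univ)⁻¹ • volume.withDensity (gigDensity p a b)

/-!
Both laws have explicit densities: `ν` is a multiple of `volume.withDensity (gigDensity (-p) 0 1)`,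
i.e. has density `f y ∝ y^(-p-1) e^(-1/(2y))`, and `GIG p 1 1` has density
`g w ∝ w^(p-1) e^(-(w+1/w)/2)`. For fixed `w` the map `x ↦ x/w² + 1/w` is affine with inverse
`y ↦ y w² - w`, so by Tonelli the image measure has density `y ↦ ∫ g(w) w² f(y w² - w) dw`.
Substituting `w = v + 1/y` gives `y w² - w = w y v`, and the integrand factors exactly as
`f(y) · v^(-p-1) e^(-(v+1/v)/2)`. The last factor integrates to the normalising constant of `g`,
since inversion maps `GIG(p; a, b)` to `GIG(-p; b, a)`.
-/

open Set
open scoped ENNReal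

lemma gigDensity_of_nonpos {p a b x : ℝ} (hx : x ≤ 0) : gigDensity p a b x = 0 :=
  if_neg hx.not_gt

lemma gigDensity_of_pos {p a b x : ℝ} (hx : 0 < x) :
    gigDensity p a b x = ENNReal.ofReal (x ^ (p - 1) * Real.exp (-(a * x + b / x) / 2)) :=
  if_pos hx

@[fun_prop]
lemma measurable_gigDensity (p a b : ℝ) : Measurable (gigDensity p a b) := by
  unfold gigDensity
  exact Measurable.ite measurableSet_Ioi (by fun_prop) measurable_const

lemma gigDensity_ne_top (p a b x : ℝ) : gigDensity p a b x ≠ ∞ := by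
  unfold gigDensity; split_ifs <;> simp

lemma map_volume_withDensity_of_inverse {T φ φ' : ℝ → ℝ} (hT : Measurable T)
    (hφ : ∀ y, HasDerivAt φ (φ' y) y) (hTφ : Function.LeftInverse T φ)
    (hφT : Function.RightInverse T φ) (f : ℝ → ℝ≥0∞) :
    (volume.withDensity f).map T =
      volume.withDensity fun y => ENNReal.ofReal |φ' y| * f (φ y) := by
  ext s hs
  rw [Measure.map_apply hT hs, withDensity_apply _ (hT hs), withDensity_apply _ hs,
    ← image_eq_preimage_of_inverse hTφ hφT]
  exact lintegral_image_eq_lintegral_abs_deriv_mul hs (fun y _ => (hφ y).hasDerivWithinAt)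
    hTφ.injective.injOn f

lemma map_inv_volume_withDensity (f : ℝ → ℝ≥0∞) :
    (volume.withDensity f).map (·⁻¹) =
      volume.withDensity fun y => ENNReal.ofReal (y ^ 2)⁻¹ * f y⁻¹ := by
  ext s hs
  rw [Measure.map_apply measurable_inv hs, withDensity_apply _ (measurable_inv hs),
    withDensity_apply _ hs]
  have h_image : (·⁻¹) '' (s \ {0}) = (·⁻¹) ⁻¹' s \ {(0 : ℝ)} := by
    rw [image_sdiff inv_injective, image_singleton, inv_zero, image_inv_eq_inv, inv_preimage]
  calc ∫⁻ x in (·⁻¹) ⁻¹' s, f x = ∫⁻ x in (·⁻¹) '' (s \ {0}), f x := by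
        rw [h_image, Measure.restrict_congr_set (sdiff_null_ae_eq_self (measure_singleton 0))]
    _ = ∫⁻ y in s \ {0}, ENNReal.ofReal |-(y ^ 2)⁻¹| * f y⁻¹ :=
        lintegral_image_eq_lintegral_abs_deriv_mul (hs.diff (measurableSet_singleton 0))
          (fun y hy => (hasDerivAt_inv hy.2).hasDerivWithinAt) inv_injective.injOn f
    _ = ∫⁻ y in s, ENNReal.ofReal (y ^ 2)⁻¹ * f y⁻¹ := by
        rw [Measure.restrict_congr_set (sdiff_null_ae_eq_self (measure_singleton 0))]
        simp only [abs_neg, abs_inv, abs_sq]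

lemma map_withDensity_div_sq_add_inv {w : ℝ} (hw : w ≠ 0) (f : ℝ → ℝ≥0∞) :
    (volume.withDensity f).map (fun x => x / w ^ 2 + 1 / w) =
      volume.withDensity fun y => ENNReal.ofReal (w ^ 2) * f (y * w ^ 2 - w) := by
  have h_left : Function.LeftInverse (fun x => x / w ^ 2 + 1 / w) (fun y => y * w ^ 2 - w) :=
    fun y => by field_simp; ring
  have h_right : Function.RightInverse (fun x => x / w ^ 2 + 1 / w) (fun y => y * w ^ 2 - w) :=
    fun x => by field_simp; ring
  have h := map_volume_withDensity_of_inverse (by fun_prop)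
    (fun y => (hasDerivAt_mul_const (w ^ 2)).sub_const w) h_left h_right f
  simpa only [abs_sq] using h

lemma Real.inv_sq_mul_inv_rpow {y : ℝ} (hy : 0 < y) (p : ℝ) :
    (y ^ 2)⁻¹ * y⁻¹ ^ (p - 1) = y ^ (-p - 1) := by
  rw [Real.inv_rpow hy.le, ← Real.rpow_neg hy.le, ← Real.rpow_natCast, ← Real.rpow_neg hy.le,
    ← Real.rpow_add hy]
  ring_nf

lemma gigDensity_inv (p a b y : ℝ) :
    ENNReal.ofReal (y ^ 2)⁻¹ * gigDensity p a b y⁻¹ = gigDensity (-p) b a y := by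
  rcases le_or_gt y 0 with hy | hy
  · rw [gigDensity_of_nonpos (inv_nonpos.mpr hy), gigDensity_of_nonpos hy, mul_zero]
  · rw [gigDensity_of_pos (inv_pos.mpr hy), gigDensity_of_pos hy,
      ← ENNReal.ofReal_mul (by positivity), ← mul_assoc, Real.inv_sq_mul_inv_rpow hy]
    congr 3
    field_simp
    ring

lemma gammaPDF_eq_gigDensity {a r x : ℝ} (hx : x ≠ 0) :
    gammaPDF a r x = ENNReal.ofReal (r ^ a / Real.Gamma a) * gigDensity a (2 * r) 0 x := by
  rcases hx.lt_or_gt with hx | hx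
  · rw [gammaPDF_of_neg hx, gigDensity_of_nonpos hx.le, mul_zero]
  · rw [gammaPDF_eq, if_pos hx.le, gigDensity_of_pos hx, ← ENNReal.ofReal_mul' (by positivity),
      mul_assoc]
    congr 4
    ring

lemma gammaMeasure_eq_smul_withDensity (a r : ℝ) :
    gammaMeasure a r =
      ENNReal.ofReal (r ^ a / Real.Gamma a) • volume.withDensity (gigDensity a (2 * r) 0) := by
  rw [← withDensity_smul _ (measurable_gigDensity _ _ _), gammaMeasure]
  refine withDensity_congr_ae ?_
  filter_upwards [measure_eq_zero_iff_ae_notMem.1 (measure_singleton (0 : ℝ))] with x hx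
  exact gammaPDF_eq_gigDensity hx

lemma map_inv_gammaMeasure (a r : ℝ) :
    (gammaMeasure a r).map (·⁻¹) =
      ENNReal.ofReal (r ^ a / Real.Gamma a) • volume.withDensity (gigDensity (-a) 0 (2 * r)) := by
  simp only [gammaMeasure_eq_smul_withDensity, Measure.map_smul, map_inv_volume_withDensity,
    gigDensity_inv]

lemma lintegral_gigDensity_neg (p a b : ℝ) :
    ∫⁻ x, gigDensity (-p) b a x = ∫⁻ x, gigDensity p a b x := by
  have h := congrArg (· univ) (map_inv_volume_withDensity (gigDensity p a b))
  simpa only [Measure.map_apply measurable_inv MeasurableSet.univ, preimage_univ,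
    withDensity_apply _ MeasurableSet.univ, Measure.restrict_univ, gigDensity_inv] using h.symm

lemma lintegral_gigDensity_lt_top {p a b : ℝ} (hp : 0 < p) (ha : 0 < a) (hb : 0 ≤ b) :
    ∫⁻ x, gigDensity p a b x < ∞ := by
  have h_le : ∀ x, gigDensity p a b x ≤ gigDensity p a 0 x := by
    intro x
    rcases le_or_gt x 0 with hx | hx
    · simp only [gigDensity_of_nonpos hx, le_refl]
    · rw [gigDensity_of_pos hx, gigDensity_of_pos hx]
      gcongr
  have h_gamma :
      ENNReal.ofReal ((a / 2) ^ p / Real.Gamma p) * ∫⁻ x, gigDensity p a 0 x = 1 := by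
    rw [← lintegral_gammaPDF_eq_one hp (half_pos ha),
      ← lintegral_const_mul _ (measurable_gigDensity _ _ _)]
    refine lintegral_congr_ae ?_
    filter_upwards [measure_eq_zero_iff_ae_notMem.1 (measure_singleton (0 : ℝ))] with x hx
    rw [gammaPDF_eq_gigDensity hx, mul_div_cancel₀ _ two_ne_zero]
  refine (lintegral_mono h_le).trans_lt (lt_top_iff_ne_top.2 fun h_top => ?_)
  rw [h_top, ENNReal.mul_top (by positivity)] at h_gamma
  exact ENNReal.top_ne_one h_gamma

lemma lintegral_gigDensity_pos (p a b : ℝ) : 0 < ∫⁻ x, gigDensity p a b x := by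
  rw [lintegral_pos_iff_support (measurable_gigDensity p a b)]
  have h_support : Ioi 0 ⊆ Function.support (gigDensity p a b) := fun x (hx : 0 < x) => by
    rw [Function.mem_support, gigDensity_of_pos hx]
    exact (ENNReal.ofReal_pos.2 (by positivity)).ne'
  exact (by simp : 0 < volume (Ioi (0 : ℝ))).trans_le (measure_mono h_support)

lemma gigDensity_mul_gigDensity_shift (p y v : ℝ) :
    gigDensity p 1 1 (v + y⁻¹) * (ENNReal.ofReal ((v + y⁻¹) ^ 2) *
        gigDensity (-p) 0 1 (y * (v + y⁻¹) ^ 2 - (v + y⁻¹))) =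
      gigDensity (-p) 0 1 y * gigDensity (-p) 1 1 v := by
  set w := v + y⁻¹ with hw_def
  by_cases hyv : 0 < y ∧ 0 < v
  · obtain ⟨hy, hv⟩ := hyv
    have hw : 0 < w := by positivity
    have h_arg : y * w ^ 2 - w = w * (y * v) := by
      rw [hw_def]; field_simp; ring
    have h_pow :
        w ^ (p - 1) * w ^ 2 * (w * (y * v)) ^ (-p - 1) = y ^ (-p - 1) * v ^ (-p - 1) := by
      rw [Real.mul_rpow hw.le (by positivity), Real.mul_rpow hy.le hv.le, ← Real.rpow_natCast,
        ← mul_assoc, ← Real.rpow_add hw, ← Real.rpow_add hw]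
      ring_nf
      rw [Real.rpow_zero, one_mul]
    have h_exp : Real.exp (-(1 * w + 1 / w) / 2) *
          Real.exp (-(0 * (w * (y * v)) + 1 / (w * (y * v))) / 2) =
        Real.exp (-(0 * y + 1 / y) / 2) * Real.exp (-(1 * v + 1 / v) / 2) := by
      rw [← Real.exp_add, ← Real.exp_add, hw_def]
      congr 1
      field_simp
      ring
    rw [h_arg, gigDensity_of_pos hw, gigDensity_of_pos (by positivity), gigDensity_of_pos hy,
      gigDensity_of_pos hv, ← ENNReal.ofReal_mul (by positivity),
      ← ENNReal.ofReal_mul (by positivity), ← ENNReal.ofReal_mul (by positivity)]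
    congr 1
    calc _ = (w ^ (p - 1) * w ^ 2 * (w * (y * v)) ^ (-p - 1)) *
          (Real.exp (-(1 * w + 1 / w) / 2) *
            Real.exp (-(0 * (w * (y * v)) + 1 / (w * (y * v))) / 2)) := by ring
      _ = _ := by rw [h_pow, h_exp]; ring
  · have h_rhs : gigDensity (-p) 0 1 y * gigDensity (-p) 1 1 v = 0 := by
      rcases not_and_or.1 hyv with hy | hv
      · rw [gigDensity_of_nonpos (not_lt.1 hy), zero_mul]
      · rw [gigDensity_of_nonpos (not_lt.1 hv), mul_zero]
    rw [h_rhs]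
    rcases le_or_gt w 0 with hw | hw
    · rw [gigDensity_of_nonpos hw, zero_mul]
    · have h_yw : y * w ≤ 1 := by
        rcases le_or_gt y 0 with hy | hy
        · nlinarith
        · have hv : v ≤ 0 := not_lt.1 fun hv => hyv ⟨hy, hv⟩
          rw [hw_def, mul_add, mul_inv_cancel₀ hy.ne']
          nlinarith
      rw [gigDensity_of_nonpos (a := 0) (by nlinarith), mul_zero, mul_zero]

lemma lintegral_gigDensity_mul_gigDensity (p y : ℝ) :
    ∫⁻ w, gigDensity p 1 1 w * (ENNReal.ofReal (w ^ 2) * gigDensity (-p) 0 1 (y * w ^ 2 - w)) =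
      gigDensity (-p) 0 1 y * ∫⁻ w, gigDensity p 1 1 w := by
  rw [← lintegral_add_right_eq_self _ y⁻¹]
  simp_rw [gigDensity_mul_gigDensity_shift]
  rw [lintegral_const_mul _ (measurable_gigDensity _ _ _), lintegral_gigDensity_neg]

lemma map_prod_withDensity_gigDensity (p : ℝ) :
    ((volume.withDensity (gigDensity (-p) 0 1)).prod (volume.withDensity (gigDensity p 1 1))).map
        (fun q : ℝ × ℝ => q.1 / q.2 ^ 2 + 1 / q.2) =
      (∫⁻ w, gigDensity p 1 1 w) • volume.withDensity (gigDensity (-p) 0 1) := by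
  set f := gigDensity (-p) 0 1
  set g := gigDensity p 1 1
  have hT : Measurable fun q : ℝ × ℝ => q.1 / q.2 ^ 2 + 1 / q.2 := by fun_prop
  ext s hs
  have h_fiber : ∀ w, g w * volume.withDensity f ((fun x => x / w ^ 2 + 1 / w) ⁻¹' s) =
      ∫⁻ y in s, g w * (ENNReal.ofReal (w ^ 2) * f (y * w ^ 2 - w)) := by
    intro w
    rcases eq_or_ne w 0 with rfl | hw
    · simp [g, gigDensity_of_nonpos le_rfl]
    · rw [← Measure.map_apply (by fun_prop) hs, map_withDensity_div_sq_add_inv hw,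
        withDensity_apply _ hs]
      exact (lintegral_const_mul _ (by fun_prop)).symm
  calc _ = ∫⁻ w, g w * volume.withDensity f ((fun x => x / w ^ 2 + 1 / w) ⁻¹' s) := by
        rw [Measure.map_apply hT hs, Measure.prod_apply_symm (hT hs),
          lintegral_withDensity_eq_lintegral_mul_non_measurable _ (measurable_gigDensity _ _ _)
            (ae_of_all _ fun w => (gigDensity_ne_top _ _ _ w).lt_top)]
        rfl
    _ = ∫⁻ y in s, ∫⁻ w, g w * (ENNReal.ofReal (w ^ 2) * f (y * w ^ 2 - w)) := by
        simp_rw [h_fiber]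
        exact lintegral_lintegral_swap (by fun_prop)
    _ = ∫⁻ y in s, f y * ∫⁻ w, g w := by
        simp_rw [g, f, lintegral_gigDensity_mul_gigDensity]
    _ = _ := by
        rw [lintegral_mul_const _ (by fun_prop), Measure.smul_apply, withDensity_apply _ hs,
          smul_eq_mul, mul_comm]

instance instSFiniteGIG (p a b : ℝ) : SFinite (GIG p a b) := by
  unfold GIG
  infer_instance

lemma map_prod_GIG {p : ℝ} (hp : 0 < p) :
    ((volume.withDensity (gigDensity (-p) 0 1)).prod (GIG p 1 1)).map
        (fun q : ℝ × ℝ => q.1 / q.2 ^ 2 + 1 / q.2) =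
      volume.withDensity (gigDensity (-p) 0 1) := by
  rw [GIG, Measure.prod_smul_right, Measure.map_smul, map_prod_withDensity_gigDensity, smul_smul,
    withDensity_apply _ MeasurableSet.univ, Measure.restrict_univ,
    ENNReal.inv_mul_cancel (lintegral_gigDensity_pos p 1 1).ne'
      (lintegral_gigDensity_lt_top hp one_pos zero_le_one).ne, one_smul]

/-- The inverse-Gamma distribution is invariant under the map `(x, w) ↦ x/w² + 1/w` with
`w ~ GIG(p; 1, 1)` independent of `x`: writing `ν` for the pushforward of `Gamma(p, 1/2)`
under `x ↦ x⁻¹`, the pushforward of `ν ⊗ GIG(p; 1, 1)` under `(x, w) ↦ x/w² + 1/w` is `ν`. -/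
theorem stmt_8 (p : ℝ) (hp : 0 < p) (ν : Measure ℝ)
    (hν : ν = Measure.map (fun x : ℝ => x⁻¹) (gammaMeasure p (1 / 2))) :
    Measure.map (fun q : ℝ × ℝ => q.1 / q.2 ^ 2 + 1 / q.2) (ν.prod (GIG p 1 1)) = ν := by
  rw [hν, map_inv_gammaMeasure, mul_one_div_cancel two_ne_zero, Measure.prod_smul_left,
    Measure.map_smul, map_prod_GIG hp]
end

section
/- Let r ≥ 1, let n ≥ 1 be an integer, let ℓ₀ be a positive definite real symmetric r×r matrix, and let (w_k)_{k≥1} be a sequence of positive definite real symmetric r×r matrices. Define L_0 = ℓ₀ and L_{k+1} = w_{k+1}·L_k·w_{k+1} + (1/n)·w_{k+1} for k ≥ 0, and define I_0 = 0 and I_k = (1/n)·Σ_{i=0}^{k-1} (w_1⁻¹ ⋯ w_i⁻¹)·w_{i+1}⁻¹·(w_i⁻¹ ⋯ w_1⁻¹) for k ≥ 1. Then for every k ≥ 0: L_k = (w_k ⋯ w_1)·(ℓ₀ + I_k)·(w_1 ⋯ w_k). -/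
open Matrix

/-- Closed form for the chain `L_{k+1} = w_{k+1}·L_k·w_{k+1} + (1/n)·w_{k+1}` started at a
positive definite `ℓ₀`: for every `k`,
`L_k = (w_k ⋯ w_1)·(ℓ₀ + I_k)·(w_1 ⋯ w_k)` where
`I_k = (1/n)·Σ_{i<k} (w_1⁻¹ ⋯ w_i⁻¹)·w_{i+1}⁻¹·(w_i⁻¹ ⋯ w_1⁻¹)`. -/
theorem stmt_13 (r : ℕ) (hr : 1 ≤ r) (n : ℕ) (hn : 1 ≤ n)
    (ℓ₀ : Matrix (Fin r) (Fin r) ℝ) (hℓ₀ : ℓ₀.PosDef)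
    (w : ℕ → Matrix (Fin r) (Fin r) ℝ) (hw : ∀ k, 1 ≤ k → (w k).PosDef)
    (L : ℕ → Matrix (Fin r) (Fin r) ℝ)
    (hL0 : L 0 = ℓ₀)
    (hL : ∀ k, L (k + 1) = w (k + 1) * L k * w (k + 1) + ((n : ℝ))⁻¹ • w (k + 1))
    (I : ℕ → Matrix (Fin r) (Fin r) ℝ)
    (hI : ∀ k, I k = ((n : ℝ))⁻¹ • ∑ i ∈ Finset.range k,
      ((List.range i).map fun j => (w (j + 1))⁻¹).prod * (w (i + 1))⁻¹ *
        ((List.range i).map fun j => (w (j + 1))⁻¹).reverse.prod) :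
    ∀ k, L k =
      ((List.range k).map fun i => w (i + 1)).reverse.prod * (ℓ₀ + I k) *
        ((List.range k).map fun i => w (i + 1)).prod := by
  have hdet : ∀ k, IsUnit (w (k + 1)).det := fun k =>
    isUnit_iff_ne_zero.mpr (ne_of_gt (hw (k + 1) (by omega)).det_pos)
  -- notation
  set P : ℕ → Matrix (Fin r) (Fin r) ℝ :=
    fun k => ((List.range k).map fun i => w (i + 1)).prod with hPdef
  set R : ℕ → Matrix (Fin r) (Fin r) ℝ :=
    fun k => ((List.range k).map fun i => w (i + 1)).reverse.prod with hRdef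
  set Q : ℕ → Matrix (Fin r) (Fin r) ℝ :=
    fun k => ((List.range k).map fun j => (w (j + 1))⁻¹).prod with hQdef
  set S : ℕ → Matrix (Fin r) (Fin r) ℝ :=
    fun k => ((List.range k).map fun j => (w (j + 1))⁻¹).reverse.prod with hSdef
  have hPsucc : ∀ k, P (k + 1) = P k * w (k + 1) := by
    intro k; simp [hPdef, List.range_succ]
  have hRsucc : ∀ k, R (k + 1) = w (k + 1) * R k := by
    intro k; simp [hRdef, List.range_succ]
  have hQsucc : ∀ k, Q (k + 1) = Q k * (w (k + 1))⁻¹ := by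
    intro k; simp [hQdef, List.range_succ]
  have hSsucc : ∀ k, S (k + 1) = (w (k + 1))⁻¹ * S k := by
    intro k; simp [hSdef, List.range_succ]
  have hA : ∀ k, R k * Q k = 1 := by
    intro k
    induction k with
    | zero => simp [hRdef, hQdef]
    | succ k ih =>
      rw [hRsucc, hQsucc, mul_assoc, ← mul_assoc (R k), ih, one_mul,
        mul_nonsing_inv _ (hdet k)]
  have hB : ∀ k, S k * P k = 1 := by
    intro k
    induction k with
    | zero => simp [hSdef, hPdef]
    | succ k ih =>
      rw [hSsucc, hPsucc, mul_assoc, ← mul_assoc (S k), ih, one_mul,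
        nonsing_inv_mul _ (hdet k)]
  intro k
  induction k with
  | zero =>
    simp [hL0, hI, hPdef, hRdef]
  | succ k ih =>
    have hIsucc : I (k + 1) = I k + ((n : ℝ))⁻¹ • (Q k * (w (k + 1))⁻¹ * S k) := by
      rw [hI, hI, Finset.sum_range_succ, smul_add]
    rw [hL k, ih, hIsucc]
    show w (k + 1) * (R k * (ℓ₀ + I k) * P k) * w (k + 1) + (n : ℝ)⁻¹ • w (k + 1) =
      R (k + 1) * (ℓ₀ + (I k + (n : ℝ)⁻¹ • (Q k * (w (k + 1))⁻¹ * S k))) * P (k + 1)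
    rw [hRsucc, hPsucc, ← add_assoc, mul_add (w (k + 1) * R k), add_mul]
    congr 1
    · simp only [mul_assoc]
    · rw [Matrix.mul_smul, Matrix.smul_mul]
      congr 1
      symm
      calc w (k + 1) * R k * (Q k * (w (k + 1))⁻¹ * S k) * (P k * w (k + 1))
          = w (k + 1) * (R k * Q k) * (w (k + 1))⁻¹ * (S k * P k) * w (k + 1) := by
            noncomm_ring
        _ = w (k + 1) := by
            rw [hA, hB, mul_one, mul_one, mul_assoc,
              nonsing_inv_mul _ (hdet k), mul_one]
end

section
/- Let r ≥ 1, let n ≥ 1 be an integer, let ℓ₀ and λ₀ be positive definite real symmetric r×r matrices, and let (w_k)_{k≥1} be a sequence of positive definite real symmetric r×r matrices. Define L_0 = ℓ₀ and L_{k+1} = w_{k+1}·L_k·w_{k+1} + (1/n)·w_{k+1} for k ≥ 0 (each L_k is positive definite), and define Λ_0 = λ₀ and Λ_{k+1} = (w_{k+1} + (1/n)·L_k⁻¹)·Λ_k·(w_{k+1} + (1/n)·L_k⁻¹) for k ≥ 0. Then for every k ≥ 0: Λ_k = L_k·(w_k⁻¹ ⋯ w_1⁻¹)·ℓ₀⁻¹·λ₀·ℓ₀⁻¹·(w_1⁻¹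 ⋯ w_k⁻¹)·L_k. -/
open Matrix

/-
Setting `A_k = w_{k+1} + (1/n) L_k⁻¹`, the recursion for `L` gives the intertwining relations
`A_k L_k = L_{k+1} w_{k+1}⁻¹` and `L_k A_k = w_{k+1}⁻¹ L_{k+1}`. Hence `L_k⁻¹ Λ_k L_k⁻¹` is
conjugated by `w_{k+1}⁻¹` at each step, and unrolling this from `ℓ₀⁻¹ Λ₀ ℓ₀⁻¹` gives the
closed form.
-/

theorem List.prod_reverse_map_range_succ {M : Type*} [Monoid M] (u : ℕ → M) (k : ℕ) :
    ((List.range (k + 1)).map u).reverse.prod = u k * ((List.range k).map u).reverse.prod := by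
  simp [List.range_succ]

theorem eq_conj_prod_of_intertwining {M : Type*} [Monoid M] (A L Λ u : ℕ → M) (X : M)
    (h0 : Λ 0 = L 0 * X * L 0) (hΛ : ∀ k, Λ (k + 1) = A k * Λ k * A k)
    (hAL : ∀ k, A k * L k = L (k + 1) * u k) (hLA : ∀ k, L k * A k = u k * L (k + 1)) (k : ℕ) :
    Λ k = L k * ((List.range k).map u).reverse.prod * X * ((List.range k).map u).prod * L k := by
  induction k with
  | zero => simpa using h0
  | succ k ih =>
    rw [hΛ, ih, List.prod_range_succ, List.prod_reverse_map_range_succ]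
    calc A k * (L k * _ * X * _ * L k) * A k
        = (A k * L k) * ((List.range k).map u).reverse.prod * X * ((List.range k).map u).prod *
            (L k * A k) := by simp only [mul_assoc]
      _ = _ := by rw [hAL, hLA]; simp only [mul_assoc]

section

variable {α ι : Type*} [CommRing α] [Fintype ι] [DecidableEq ι] {L w : Matrix ι ι α}

theorem add_smul_inv_mul_eq (hL : IsUnit L.det) (hw : IsUnit w.det) (c : α) :
    (w + c • L⁻¹) * L = (w * L * w + c • w) * w⁻¹ := by
  rw [add_mul, add_mul, smul_mul, smul_mul, nonsing_inv_mul _ hL, mul_assoc (w * L),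
    mul_nonsing_inv _ hw, mul_one]

theorem mul_add_smul_inv_eq (hL : IsUnit L.det) (hw : IsUnit w.det) (c : α) :
    L * (w + c • L⁻¹) = w⁻¹ * (w * L * w + c • w) := by
  rw [mul_add, mul_add, Matrix.mul_smul, Matrix.mul_smul, mul_nonsing_inv _ hL,
    ← mul_assoc, ← mul_assoc, nonsing_inv_mul _ hw, one_mul]

end

open scoped ComplexOrder in
theorem Matrix.PosDef.mul_mul_self_add_smul {𝕜 ι : Type*} [RCLike 𝕜] [Fintype ι] [DecidableEq ι]
    {L w : Matrix ι ι 𝕜} (hL : L.PosDef) (hw : w.PosDef) {c : 𝕜} (hc : 0 ≤ c) :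
    (w * L * w + c • w).PosDef := by
  have hconj : (wᴴ * L * w).PosDef :=
    hL.conjTranspose_mul_mul_same (mulVec_injective_iff_isUnit.mpr hw.isUnit)
  rw [hw.isHermitian.eq] at hconj
  exact hconj.add_posSemidef (hw.posSemidef.smul hc)

theorem stmt_14_general (r : ℕ) (n : ℕ)
    (ℓ₀ Λ₀ : Matrix (Fin r) (Fin r) ℝ) (hℓ₀ : ℓ₀.PosDef)
    (w : ℕ → Matrix (Fin r) (Fin r) ℝ) (hw : ∀ k, 1 ≤ k → (w k).PosDef)
    (L : ℕ → Matrix (Fin r) (Fin r) ℝ)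
    (hL0 : L 0 = ℓ₀)
    (hL : ∀ k, L (k + 1) = w (k + 1) * L k * w (k + 1) + ((n : ℝ))⁻¹ • w (k + 1))
    (Λ : ℕ → Matrix (Fin r) (Fin r) ℝ)
    (hΛ0 : Λ 0 = Λ₀)
    (hΛ : ∀ k, Λ (k + 1) =
      (w (k + 1) + ((n : ℝ))⁻¹ • (L k)⁻¹) * Λ k * (w (k + 1) + ((n : ℝ))⁻¹ • (L k)⁻¹)) :
    (∀ k, (L k).PosDef) ∧
      ∀ k, Λ k =
        L k * ((List.range k).map fun i => (w (i + 1))⁻¹).reverse.prod * ℓ₀⁻¹ * Λ₀ * ℓ₀⁻¹ *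
          ((List.range k).map fun i => (w (i + 1))⁻¹).prod * L k := by
  have hwk (k : ℕ) : (w (k + 1)).PosDef := hw (k + 1) k.succ_pos
  have hLk (k : ℕ) : (L k).PosDef := by
    induction k with
    | zero => exact hL0 ▸ hℓ₀
    | succ k ih => exact hL k ▸ ih.mul_mul_self_add_smul (hwk k) (by positivity)
  have hdet {M : Matrix (Fin r) (Fin r) ℝ} (hM : M.PosDef) : IsUnit M.det :=
    (isUnit_iff_isUnit_det M).mp hM.isUnit
  refine ⟨hLk, fun k => ?_⟩
  have hstart : Λ 0 = L 0 * (ℓ₀⁻¹ * Λ₀ * ℓ₀⁻¹) * L 0 := by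
    rw [hL0, hΛ0, ← mul_assoc, ← mul_assoc, mul_nonsing_inv _ (hdet hℓ₀), one_mul, mul_assoc,
      nonsing_inv_mul _ (hdet hℓ₀), mul_one]
  have hclosed := eq_conj_prod_of_intertwining _ L Λ (fun i => (w (i + 1))⁻¹) _ hstart hΛ
    (fun k => hL k ▸ add_smul_inv_mul_eq (hdet (hLk k)) (hdet (hwk k)) _)
    (fun k => hL k ▸ mul_add_smul_inv_eq (hdet (hLk k)) (hdet (hwk k)) _) k
  simpa only [mul_assoc] using hclosed

/-- Closed form for the chain `Λ_{k+1} = (w_{k+1} + (1/n)·L_k⁻¹)·Λ_k·(w_{k+1} + (1/n)·L_k⁻¹)`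
driven by `L_{k+1} = w_{k+1}·L_k·w_{k+1} + (1/n)·w_{k+1}`: each `L_k` is positive definite
and for every `k`,
`Λ_k = L_k·(w_k⁻¹ ⋯ w_1⁻¹)·ℓ₀⁻¹·Λ₀·ℓ₀⁻¹·(w_1⁻¹ ⋯ w_k⁻¹)·L_k`. -/
theorem stmt_14 (r : ℕ) (hr : 1 ≤ r) (n : ℕ) (hn : 1 ≤ n)
    (ℓ₀ Λ₀ : Matrix (Fin r) (Fin r) ℝ) (hℓ₀ : ℓ₀.PosDef) (hΛ₀ : Λ₀.PosDef)
    (w : ℕ → Matrix (Fin r) (Fin r) ℝ) (hw : ∀ k, 1 ≤ k → (w k).PosDef)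
    (L : ℕ → Matrix (Fin r) (Fin r) ℝ)
    (hL0 : L 0 = ℓ₀)
    (hL : ∀ k, L (k + 1) = w (k + 1) * L k * w (k + 1) + ((n : ℝ))⁻¹ • w (k + 1))
    (Λ : ℕ → Matrix (Fin r) (Fin r) ℝ)
    (hΛ0 : Λ 0 = Λ₀)
    (hΛ : ∀ k, Λ (k + 1) =
      (w (k + 1) + ((n : ℝ))⁻¹ • (L k)⁻¹) * Λ k * (w (k + 1) + ((n : ℝ))⁻¹ • (L k)⁻¹)) :
    (∀ k, (L k).PosDef) ∧
      ∀ k, Λ k =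
        L k * ((List.range k).map fun i => (w (i + 1))⁻¹).reverse.prod * ℓ₀⁻¹ * Λ₀ * ℓ₀⁻¹ *
          ((List.range k).map fun i => (w (i + 1))⁻¹).prod * L k :=
  stmt_14_general r n ℓ₀ Λ₀ hℓ₀ w hw L hL0 hL Λ hΛ0 hΛ
end

section
/- Fix p ∈ ℝ. For each integer n ≥ 1 let μ_n := Measure.map (fun x => Real.sqrt n · Real.log x) (GIG(p; n, n)), a Borel probability measure on ℝ. Then as n → ∞, μ_n converges weakly (i.e. in distribution, in the topology of ProbabilityMeasure ℝ) to the standard Gaussian measure gaussianReal 0 1. -/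
/-!
Substituting `x = exp (y / √a)` turns `GIG(p; a, a)` into the law of `y = √a · log x`, whose
density is proportional to `exp (p y / √a - a (cosh (y / √a) - 1))`. Since
`a (cosh (y / √a) - 1)` is at least `y² / 2` and tends to `y² / 2`, dominated convergence
applies to the numerator and to the normalizing constant of these densities, and the limit is
the normalized density `exp (-y² / 2)` of the standard Gaussian.
-/

open MeasureTheory ProbabilityTheory Filter

open Topology Real
open scoped ENNReal

namespace Real

lemma one_add_sq_div_two_le_cosh (t : ℝ) : 1 + t ^ 2 / 2 ≤ cosh t := by
  have h := sum_le_hasSum (Finset.range 2) (fun i _ => by simp only [pow_mul]; positivity)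
    (hasSum_cosh t)
  norm_num [Finset.sum_range_succ] at h
  linarith

lemma cosh_sub_one_le_of_sq_le_two {t : ℝ} (ht : t ^ 2 ≤ 2) :
    cosh t - 1 ≤ t ^ 2 / 2 + (t ^ 2 / 2) ^ 2 := by
  have hexp := abs_exp_sub_one_sub_id_le (x := t ^ 2 / 2)
    (by rw [abs_of_nonneg (by positivity)]; linarith)
  have := cosh_le_exp_half_sq t
  linarith [le_abs_self (exp (t ^ 2 / 2) - 1 - t ^ 2 / 2)]

lemma tendsto_mul_cosh_div_sqrt_sub_one (y : ℝ) :
    Tendsto (fun a => a * (cosh (y / √a) - 1)) atTop (𝓝 (y ^ 2 / 2)) := by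
  have hsq : ∀ a : ℝ, 0 < a → a * (y / √a) ^ 2 = y ^ 2 := fun a ha => by
    rw [div_pow, sq_sqrt ha.le]; field_simp
  have upper :
      Tendsto (fun a : ℝ => y ^ 2 / 2 + y ^ 4 / 4 * a⁻¹) atTop (𝓝 (y ^ 2 / 2)) := by
    have := (tendsto_inv_atTop_zero (𝕜 := ℝ)).const_mul (y ^ 4 / 4) |>.const_add (y ^ 2 / 2)
    rwa [mul_zero, add_zero] at this
  refine tendsto_of_tendsto_of_tendsto_of_le_of_le' tendsto_const_nhds upper ?_ ?_
  · filter_upwards [eventually_gt_atTop 0] with a ha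
    have := one_add_sq_div_two_le_cosh (y / √a)
    nlinarith [hsq a ha]
  · filter_upwards [eventually_ge_atTop (y ^ 2 / 2), eventually_gt_atTop 0] with a hya ha
    have hle : (y / √a) ^ 2 ≤ 2 := by
      rw [div_pow, sq_sqrt ha.le, div_le_iff₀ ha]; linarith
    have := cosh_sub_one_le_of_sq_le_two hle
    rw [div_pow, sq_sqrt ha.le] at this
    calc a * (cosh (y / √a) - 1) ≤ a * (y ^ 2 / a / 2 + (y ^ 2 / a / 2) ^ 2) := by gcongr
      _ = y ^ 2 / 2 + y ^ 4 / 4 * a⁻¹ := by field_simp; ring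

end Real

section Normalization

variable {α : Type*} [MeasurableSpace α]

lemma inv_measure_univ_smul_smul {c : ℝ≥0∞} (hc₀ : c ≠ 0) (hc : c ≠ ∞) (ν : Measure α) :
    ((c • ν) Set.univ)⁻¹ • (c • ν) = (ν Set.univ)⁻¹ • ν := by
  rw [Measure.smul_apply, smul_eq_mul, ENNReal.mul_inv (.inl hc₀) (.inl hc), smul_smul,
    mul_comm _ c, ← mul_assoc, ENNReal.mul_inv_cancel hc₀ hc, one_mul]

lemma integral_inv_measure_univ_smul_withDensity_ofReal {μ : Measure α} {g : α → ℝ}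
    (hg : Measurable g) (hg₀ : 0 ≤ g) (f : α → ℝ) :
    ∫ x, f x ∂(((μ.withDensity fun x => ENNReal.ofReal (g x)) Set.univ)⁻¹ •
        μ.withDensity fun x => ENNReal.ofReal (g x)) =
      (∫ x, g x * f x ∂μ) / ∫ x, g x ∂μ := by
  rw [integral_smul_measure, withDensity_apply _ MeasurableSet.univ, Measure.restrict_univ,
    integral_withDensity_eq_integral_toReal_smul hg.ennreal_ofReal
      (ae_of_all _ fun _ => ENNReal.ofReal_lt_top),
    integral_eq_lintegral_of_nonneg_ae (ae_of_all _ hg₀) hg.aestronglyMeasurable,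
    ENNReal.toReal_inv, smul_eq_mul, div_eq_inv_mul]
  simp only [ENNReal.toReal_ofReal (hg₀ _), smul_eq_mul]

lemma tendsto_integral_mul_div_integral [TopologicalSpace α] [OpensMeasurableSpace α]
    {μ : Measure α} {ι : Type*} {l : Filter ι} [l.IsCountablyGenerated] {g : ι → α → ℝ}
    {G bound : α → ℝ} (hg : ∀ᶠ i in l, AEStronglyMeasurable (g i) μ)
    (hbound : ∀ᶠ i in l, ∀ᵐ x ∂μ, ‖g i x‖ ≤ bound x) (hint : Integrable bound μ)
    (hlim : ∀ᵐ x ∂μ, Tendsto (fun i => g i x) l (𝓝 (G x))) (hG : ∫ x, G x ∂μ ≠ 0)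
    (f : BoundedContinuousFunction α ℝ) :
    Tendsto (fun i => (∫ x, g i x * f x ∂μ) / ∫ x, g i x ∂μ) l
      (𝓝 ((∫ x, G x * f x ∂μ) / ∫ x, G x ∂μ)) := by
  refine Tendsto.div ?_
    (tendsto_integral_filter_of_dominated_convergence bound hg hbound hint hlim) hG
  refine tendsto_integral_filter_of_dominated_convergence (fun x => bound x * ‖f‖)
    ?_ ?_ (hint.mul_const _) ?_
  · filter_upwards [hg] with i hi using hi.mul f.continuous.aestronglyMeasurable
  · filter_upwards [hbound] with i hi
    filter_upwards [hi] with x hx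
    rw [norm_mul]
    exact mul_le_mul hx (f.norm_coe_le_norm x) (norm_nonneg _) ((norm_nonneg _).trans hx)
  · filter_upwards [hlim] with x hx using hx.mul_const _

end Normalization

lemma gaussianReal_zero_one_eq :
    gaussianReal 0 1 =
      ((volume.withDensity fun y => ENNReal.ofReal (exp (-y ^ 2 / 2))) Set.univ)⁻¹ •
        volume.withDensity fun y => ENNReal.ofReal (exp (-y ^ 2 / 2)) := by
  have h : gaussianReal 0 1 = ENNReal.ofReal (√(2 * π))⁻¹ •
      volume.withDensity fun y => ENNReal.ofReal (exp (-y ^ 2 / 2)) := by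
    rw [gaussianReal_of_var_ne_zero 0 one_ne_zero, ← withDensity_smul' _ _ ENNReal.ofReal_ne_top]
    congr 1
    ext y
    simp [gaussianPDF, gaussianPDFReal, ← ENNReal.ofReal_mul]
  calc gaussianReal 0 1 = (gaussianReal 0 1 Set.univ)⁻¹ • gaussianReal 0 1 := by simp
    _ = _ := by
      rw [h, inv_measure_univ_smul_smul (by simp [pi_pos]) ENNReal.ofReal_ne_top]

/-- Up to normalization, the Lebesgue density of `√a · log x` for `x ∼ GIG(p; a, a)`. -/
noncomputable def logGIGDensity (p a y : ℝ) : ℝ :=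
  exp (p * y / √a - a * (cosh (y / √a) - 1))

lemma logGIGDensity_pos (p a y : ℝ) : 0 < logGIGDensity p a y := exp_pos _

lemma continuous_logGIGDensity (p a : ℝ) : Continuous (logGIGDensity p a) := by
  unfold logGIGDensity; fun_prop

lemma tendsto_logGIGDensity (p y : ℝ) :
    Tendsto (fun a => logGIGDensity p a y) atTop (𝓝 (exp (-y ^ 2 / 2))) := by
  have hdrift : Tendsto (fun a => p * y / √a) atTop (𝓝 0) :=
    tendsto_const_nhds.div_atTop tendsto_sqrt_atTop
  have := (continuous_exp.tendsto _).comp (hdrift.sub (tendsto_mul_cosh_div_sqrt_sub_one y))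
  rwa [zero_sub, ← neg_div] at this

lemma logGIGDensity_le (p : ℝ) {a : ℝ} (ha : 1 ≤ a) (y : ℝ) :
    logGIGDensity p a y ≤ exp (p ^ 2) * exp (-(1 / 4) * y ^ 2) := by
  have hs : 1 ≤ √a := one_le_sqrt.mpr ha
  have hdrift : p * y / √a ≤ p ^ 2 + y ^ 2 / 4 :=
    calc p * y / √a ≤ |p * y| / √a := by gcongr; exact le_abs_self _
      _ ≤ |p| * |y| := by rw [← abs_mul]; exact div_le_self (abs_nonneg _) hs
      _ ≤ p ^ 2 + y ^ 2 / 4 := by nlinarith [sq_nonneg (|p| - |y| / 2), sq_abs p, sq_abs y]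
  have hcosh : y ^ 2 / 2 ≤ a * (cosh (y / √a) - 1) := by
    have := one_add_sq_div_two_le_cosh (y / √a)
    rw [div_pow, sq_sqrt (by linarith)] at this
    calc y ^ 2 / 2 = a * (y ^ 2 / a / 2) := by field_simp
      _ ≤ a * (cosh (y / √a) - 1) := by gcongr; linarith
  rw [logGIGDensity, ← exp_add]
  gcongr
  linarith

lemma gigDensity_eq_indicator (p a b : ℝ) :
    gigDensity p a b = (Set.Ioi 0).indicator
      fun x => ENNReal.ofReal (x ^ (p - 1) * exp (-(a * x + b / x) / 2)) := by
  ext x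
  simp only [gigDensity, Set.indicator_apply, Set.mem_Ioi]

lemma exp_div_sqrt_mul_gig_exp_eq (p a y : ℝ) :
    exp (y / √a) / √a *
        (exp (y / √a) ^ (p - 1) * exp (-(a * exp (y / √a) + a / exp (y / √a)) / 2)) =
      exp (-a) / √a * logGIGDensity p a y := by
  have hy : p * y / √a = p * (y / √a) := by ring
  rw [logGIGDensity, hy, ← exp_mul, div_eq_mul_inv a, ← exp_neg, cosh_eq]
  generalize y / √a = t
  rw [div_mul_eq_mul_div, div_mul_eq_mul_div, ← exp_add, ← exp_add, ← exp_add]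
  congr 2
  ring

lemma map_sqrt_mul_log_withDensity_gigDensity (p : ℝ) {a : ℝ} (ha : 0 < a) :
    (volume.withDensity (gigDensity p a a)).map (fun x => √a * log x) =
      ENNReal.ofReal (exp (-a) / √a) •
        volume.withDensity fun y => ENNReal.ofReal (logGIGDensity p a y) := by
  set E : ℝ → ℝ := fun y => exp (y / √a)
  have hsa : 0 < √a := sqrt_pos.mpr ha
  have hE : Measurable E := by fun_prop
  have hE' : ∀ y, HasDerivAt E (exp (y / √a) / √a) y := fun y => by
    simpa [E, div_eq_mul_inv] using ((hasDerivAt_id y).div_const √a).exp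
  have hE_inj : Function.Injective E := fun y z h => by
    simpa [E, hsa.ne'] using h
  have hE_range : Set.range E = Set.Ioi 0 := by
    refine Set.Subset.antisymm (Set.range_subset_iff.mpr fun y => exp_pos _) fun x hx => ?_
    exact ⟨√a * log x, by simp [E, hsa.ne', exp_log (Set.mem_Ioi.mp hx)]⟩
  have hLE : (fun x => √a * log x) ∘ E = id := by
    ext y
    simp only [Function.comp_apply, E, log_exp, id]
    field_simp
  suffices h : volume.withDensity (gigDensity p a a) =
      (ENNReal.ofReal (exp (-a) / √a) •
        volume.withDensity fun y => ENNReal.ofReal (logGIGDensity p a y)).map E by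
    rw [h, Measure.map_map (by fun_prop) hE, hLE, Measure.map_id]
  ext s hs
  rw [Measure.map_apply hE hs, Measure.smul_apply, withDensity_apply _ hs,
    withDensity_apply _ (hE hs), smul_eq_mul, gigDensity_eq_indicator,
    lintegral_indicator measurableSet_Ioi, Measure.restrict_restrict measurableSet_Ioi,
    Set.inter_comm, ← hE_range, ← Set.image_preimage_eq_inter_range,
    lintegral_image_eq_lintegral_abs_deriv_mul (hE hs) (fun y _ => (hE' y).hasDerivWithinAt)
      hE_inj.injOn,
    ← lintegral_const_mul _ (continuous_logGIGDensity p a).measurable.ennreal_ofReal]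
  refine lintegral_congr fun y => ?_
  rw [abs_of_pos (by positivity), ← ENNReal.ofReal_mul (by positivity),
    ← ENNReal.ofReal_mul (by positivity), exp_div_sqrt_mul_gig_exp_eq]

lemma map_sqrt_mul_log_GIG (p : ℝ) {a : ℝ} (ha : 0 < a) :
    (GIG p a a).map (fun x => √a * log x) =
      ((volume.withDensity fun y => ENNReal.ofReal (logGIGDensity p a y)) Set.univ)⁻¹ •
        volume.withDensity fun y => ENNReal.ofReal (logGIGDensity p a y) := by
  have h := map_sqrt_mul_log_withDensity_gigDensity p ha
  have huniv : volume.withDensity (gigDensity p a a) Set.univ =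
      (volume.withDensity (gigDensity p a a)).map (fun x => √a * log x) Set.univ := by
    rw [Measure.map_apply (by fun_prop) MeasurableSet.univ, Set.preimage_univ]
  rw [GIG, Measure.map_smul, huniv, h,
    inv_measure_univ_smul_smul (by simp; positivity) ENNReal.ofReal_ne_top]

/-- The law of `√n · log x` under `GIG(p; n, n)` converges weakly (in distribution) to the
standard Gaussian as `n → ∞`: integrals of every bounded continuous function converge. -/
theorem stmt_15 (p : ℝ) :
    ∀ f : BoundedContinuousFunction ℝ ℝ,
      Tendsto
        (fun n : ℕ =>
          ∫ x, f x ∂(Measure.map (fun x => Real.sqrt n * Real.log x) (GIG p n n)))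
        atTop (nhds (∫ x, f x ∂(gaussianReal 0 1))) := by
  intro f
  have hgauss : ∫ y, exp (-y ^ 2 / 2) ≠ 0 :=
    (integral_exp_pos (integrable_exp_neg_mul_sq (b := 1 / 2) one_half_pos |>.congr
      (ae_of_all _ fun y => by ring_nf))).ne'
  have hlim := tendsto_integral_mul_div_integral
    (Eventually.of_forall fun a => (continuous_logGIGDensity p a).aestronglyMeasurable)
    (eventually_ge_atTop 1 |>.mono fun a ha => ae_of_all _ fun y => by
      rw [norm_of_nonneg (logGIGDensity_pos p a y).le]; exact logGIGDensity_le p ha y)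
    ((integrable_exp_neg_mul_sq (b := 1 / 4) (by norm_num)).const_mul (exp (p ^ 2)))
    (ae_of_all _ (tendsto_logGIGDensity p)) hgauss f
  rw [gaussianReal_zero_one_eq, integral_inv_measure_univ_smul_withDensity_ofReal
    (by fun_prop) (fun y => (exp_pos _).le)]
  refine (hlim.comp tendsto_natCast_atTop_atTop).congr' ?_
  filter_upwards [eventually_gt_atTop 0] with n hn
  rw [Function.comp_apply, map_sqrt_mul_log_GIG p (Nat.cast_pos.mpr hn),
    integral_inv_measure_univ_smul_withDensity_ofReal (continuous_logGIGDensity p n).measurable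
      (fun y => (logGIGDensity_pos p n y).le)]
end
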